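/- Let G be the ONCF-gadget and let c : {g1,…,g10} → {red, blue} be a 2-coloring such that for each i with 4 ≤ i ≤ 9 the open neighborhood N(g_i) contains a uniquely colored vertex (there exists u ∈ N(g_i) with c(u) ≠ c(w) for all w ∈ N(g_i), w ≠ u). If c(g1) = c(g2) = c(g3) = red, then c(g9) = red. -/

import Mathlib

/-!
If two of three vertices share a colour, one of the three is uniquely coloured only if the third
has the other colour. Since `g1, g2` are red, the condition at `g4` (neighbours `g1, g2, g6`) forces `g6` to be blue, and
likewise the condition at `g5` (neighbours `g2, g3, g7`) forces `g7` to be blue. The condition at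
`g8`, whose neighbours are `g6, g7, g9`, then forces `g9` to be red.
-/

inductive Color where
  | red
  | blue
deriving DecidableEq

/-- The ONCF-gadget: a graph on ten vertices `g1, …, g10` (here indexed `0, …, 9`)
with edges g1g4, g2g4, g2g5, g3g5, g4g6, g5g7, g6g8, g7g8, g8g9, g9g10. -/
def oncfGadget : SimpleGraph (Fin 10) :=
  SimpleGraph.fromEdgeSet
    {s(0, 3), s(1, 3), s(1, 4), s(2, 4), s(3, 5),
     s(4, 6), s(5, 7), s(6, 7), s(7, 8), s(8, 9)}

theorem Color.eq_blue_of_ne_red {x : Color} (h : x ≠ Color.red) : x = Color.blue := by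
  cases x <;> simp_all

theorem Color.eq_red_of_ne_blue {x : Color} (h : x ≠ Color.blue) : x = Color.red := by
  cases x <;> simp_all

section UniquelyColored

variable {V α : Type*}

def HasUniquelyColored (c : V → α) (s : Set V) : Prop :=
  ∃ u ∈ s, ∀ w ∈ s, w ≠ u → c w ≠ c u

theorem HasUniquelyColored.ne_of_triple {c : V → α} {a b x : V}
    (h : HasUniquelyColored c {a, b, x}) (hab : a ≠ b) (hc : c a = c b) : c x ≠ c a := by
  obtain ⟨u, hu, huniq⟩ := h
  rcases hu with rfl | rfl | rfl
  · exact absurd hc.symm (huniq b (by simp) hab.symm)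
  · exact absurd hc (huniq a (by simp) hab)
  · by_cases hau : a = u
    · subst hau
      exact absurd hc.symm (huniq b (by simp) hab.symm)
    · exact (huniq a (by simp) hau).symm

end UniquelyColored

theorem oncfGadget_neighborSet_three : oncfGadget.neighborSet 3 = {0, 1, 5} := by
  ext u; fin_cases u <;> simp [oncfGadget]

theorem oncfGadget_neighborSet_four : oncfGadget.neighborSet 4 = {1, 2, 6} := by
  ext u; fin_cases u <;> simp [oncfGadget]

theorem oncfGadget_neighborSet_seven : oncfGadget.neighborSet 7 = {5, 6, 8} := by
  ext u; fin_cases u <;> simp [oncfGadget]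

/-- If `c` is a 2-coloring of the ONCF-gadget such that for every `i` with
`4 ≤ i ≤ 9` (i.e. indices `3 ≤ i ≤ 8`) the open neighborhood of `g_i` contains a
uniquely colored vertex, and `g1, g2, g3` are all red, then `g9` is red. -/
theorem oncfGadget_all_red (c : Fin 10 → Color)
    (h : ∀ i : Fin 10, 3 ≤ i.val → i.val ≤ 8 →
      ∃ u ∈ oncfGadget.neighborSet i,
        ∀ w ∈ oncfGadget.neighborSet i, w ≠ u → c w ≠ c u)
    (h1 : c 0 = Color.red) (h2 : c 1 = Color.red) (h3 : c 2 = Color.red) :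
    c 8 = Color.red := by
  have hN3 : HasUniquelyColored c {0, 1, 5} :=
    oncfGadget_neighborSet_three ▸ h 3 (by decide) (by decide)
  have hN4 : HasUniquelyColored c {1, 2, 6} :=
    oncfGadget_neighborSet_four ▸ h 4 (by decide) (by decide)
  have hN7 : HasUniquelyColored c {5, 6, 8} :=
    oncfGadget_neighborSet_seven ▸ h 7 (by decide) (by decide)
  have h5 : c 5 = Color.blue :=
    Color.eq_blue_of_ne_red (h1 ▸ hN3.ne_of_triple (by decide) (h1.trans h2.symm))
  have h6 : c 6 = Color.blue :=
    Color.eq_blue_of_ne_red (h2 ▸ hN4.ne_of_triple (by decide) (h2.trans h3.symm))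
  exact Color.eq_red_of_ne_blue (h5 ▸ hN7.ne_of_triple (by decide) (h5.trans h6.symm))
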